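/- For every a ∈ (0, 2π) and every θ ∈ ℝ, setting c = (π−a)/√(a(2π−a)) and t = 2√(a(2π−a)), one has exp(t(cos θ·p1 + sin θ·p2 + c·k))·exp(−t·c·k) = diag(e^{ia}, e^{−ia}); in particular the left-hand side is independent of θ. -/

import Mathlib

/-!
The generator `X = t (cos θ p1 + sin θ p2 + c k)` squares to a scalar: `p1`, `p2`, `k` pairwise
anticommute and each squares to `-1/4`, so `X² = -(t²(1 + c²)/4) = -(a(2π - a) + (π - a)²) = -π²`.
For an element `J` with `J² = -1` Euler's formula `exp (z J) = cos z + sin z J` holds, hence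
`exp X = cos π = -1`. The second factor is the exponential of the diagonal matrix
`-t c k = 2(a - π) k`, and multiplying it by `-1` shifts the phases `±(a - π)` by `π`.
-/

open Matrix Complex

noncomputable def p1 : Matrix (Fin 2) (Fin 2) ℂ := (1/2 : ℂ) • !![0, 1; -1, 0]
noncomputable def p2 : Matrix (Fin 2) (Fin 2) ℂ := (1/2 : ℂ) • !![0, I; I, 0]
noncomputable def k : Matrix (Fin 2) (Fin 2) ℂ := (1/2 : ℂ) • !![I, 0; 0, -I]

section EulerFormula

variable {𝔸 : Type*} [Ring 𝔸] [Algebra ℂ 𝔸] [TopologicalSpace 𝔸] [IsTopologicalRing 𝔸]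
  [ContinuousSMul ℂ 𝔸] [T2Space 𝔸]

open Nat in
theorem NormedSpace.exp_smul_of_mul_self_eq_neg_one {y : 𝔸} (hy : y * y = -1) (z : ℂ) :
    NormedSpace.exp (z • y) = Complex.cos z • 1 + Complex.sin z • y := by
  have hy_even : ∀ n : ℕ, y ^ (2 * n) = ((-1 : ℂ) ^ n) • 1 := fun n => by
    rw [pow_mul, sq, hy, ← neg_one_smul ℂ (1 : 𝔸), smul_pow, one_pow]
  rw [NormedSpace.exp_eq_tsum ℂ]
  refine HasSum.tsum_eq (HasSum.even_add_odd ?_ ?_)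
  · convert (Complex.hasSum_cos z).smul_const (1 : 𝔸) using 2 with n
    rw [smul_pow, hy_even, smul_smul, smul_smul]
    congr 1
    ring
  · convert (Complex.hasSum_sin z).smul_const y using 2 with n
    rw [smul_pow, pow_succ y, hy_even, smul_mul_assoc, one_mul, smul_smul, smul_smul]
    congr 1
    ring

theorem NormedSpace.exp_eq_of_mul_self_eq_neg_sq {x : 𝔸} {r : ℂ} (hr : r ≠ 0)
    (hx : x * x = -(r ^ 2) • 1) :
    NormedSpace.exp x = Complex.cos r • 1 + (Complex.sin r / r) • x := by
  have hy : (r⁻¹ • x) * (r⁻¹ • x) = -1 := by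
    rw [smul_mul_smul_comm, hx, smul_smul, show r⁻¹ * r⁻¹ * -r ^ 2 = -1 by field_simp,
      neg_one_smul]
  conv_lhs => rw [← smul_inv_smul₀ hr x]
  rw [exp_smul_of_mul_self_eq_neg_one hy, smul_smul, div_eq_mul_inv]

end EulerFormula

lemma mul_self_smul_p1_add_smul_p2_add_smul_k (x y z : ℂ) :
    (x • p1 + y • p2 + z • k) * (x • p1 + y • p2 + z • k) =
      -((x ^ 2 + y ^ 2 + z ^ 2) / 4) • 1 := by
  ext i j
  fin_cases i <;> fin_cases j <;> simp [p1, p2, k, Matrix.mul_apply, Fin.sum_univ_two]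
  · linear_combination (y ^ 2 + z ^ 2) / 4 * I_sq
  · ring
  · ring
  · linear_combination (y ^ 2 + z ^ 2) / 4 * I_sq

lemma exp_smul_smul_p1_add_smul_p2_add_smul_k_eq_neg_one {t x y z : ℂ}
    (h : t ^ 2 * (x ^ 2 + y ^ 2 + z ^ 2) / 4 = Real.pi ^ 2) :
    NormedSpace.exp (t • (x • p1 + y • p2 + z • k)) = -1 := by
  rw [NormedSpace.exp_eq_of_mul_self_eq_neg_sq (r := Real.pi) (ofReal_ne_zero.2 Real.pi_ne_zero)]
  · simp
  · rw [smul_mul_smul_comm, mul_self_smul_p1_add_smul_p2_add_smul_k, smul_smul, ← h]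
    congr 1
    ring

lemma smul_k_eq_diagonal (z : ℂ) : z • k = diagonal ![z * I / 2, -(z * I / 2)] := by
  ext i j
  fin_cases i <;> fin_cases j <;> simp [k] <;> ring

lemma exp_smul_k (z : ℂ) :
    NormedSpace.exp (z • k) = diagonal ![Complex.exp (z * I / 2), Complex.exp (-(z * I / 2))] := by
  rw [smul_k_eq_diagonal, Matrix.exp_diagonal]
  congr 1
  ext i
  fin_cases i <;> simp [Complex.exp_eq_exp_ℂ]

/-- For every `a ∈ (0, 2π)` and every `θ`, with `c = (π - a)/√(a(2π - a))` and
`t = 2√(a(2π - a))`, the geodesic at time `t` reaches `diag(e^{ia}, e^{-ia})`,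
independently of `θ`. -/
theorem su2_geodesics_reach_ek (a : ℝ) (ha : 0 < a) (ha' : a < 2 * Real.pi) (θ : ℝ) :
    NormedSpace.exp
        (((2 * Real.sqrt (a * (2 * Real.pi - a)) : ℝ) : ℂ) •
          ((Real.cos θ : ℂ) • p1 + (Real.sin θ : ℂ) • p2
            + (((Real.pi - a) / Real.sqrt (a * (2 * Real.pi - a)) : ℝ) : ℂ) • k))
      * NormedSpace.exp
        ((-((2 * Real.sqrt (a * (2 * Real.pi - a))) *
            ((Real.pi - a) / Real.sqrt (a * (2 * Real.pi - a)))) : ℝ) • k : Matrix _ _ ℂ)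
      = diagonal ![Complex.exp (I * a), Complex.exp (-(I * a))] := by
  set s := Real.sqrt (a * (2 * Real.pi - a))
  have hpos : 0 < a * (2 * Real.pi - a) := by nlinarith
  have hs : s ≠ 0 := (Real.sqrt_pos.2 hpos).ne'
  have hs2 : s ^ 2 = a * (2 * Real.pi - a) := Real.sq_sqrt hpos.le
  have h_sq : (2 * s) ^ 2 * (Real.cos θ ^ 2 + Real.sin θ ^ 2 + ((Real.pi - a) / s) ^ 2) / 4
      = Real.pi ^ 2 := by
    rw [Real.cos_sq_add_sin_sq]
    field_simp
    linear_combination 4 * hs2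
  have h_second : -((2 * s) * ((Real.pi - a) / s)) = 2 * (a - Real.pi) := by
    field_simp
    ring
  rw [exp_smul_smul_p1_add_smul_p2_add_smul_k_eq_neg_one (by exact_mod_cast h_sq), h_second,
    ← Complex.coe_smul, exp_smul_k, neg_one_mul, diagonal_neg]
  congr 1
  ext i
  fin_cases i
  · rw [show ((2 * (a - Real.pi) : ℝ) : ℂ) * I / 2 = I * a - Real.pi * I by push_cast; ring]
    simp [Complex.exp_sub, Complex.exp_pi_mul_I, div_neg]
  · rw [show -(((2 * (a - Real.pi) : ℝ) : ℂ) * I / 2) = -(I * a) + Real.pi * I by push_cast; ring]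
    simp [Complex.exp_add, Complex.exp_pi_mul_I]
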